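/- Let R be a ring in which p is nilpotent, let R → R' be a faithfully flat ring homomorphism, and let M be a flat W_n(R)-module. Then the Amitsur-type sequence 0 → M → M ⊗_{W_n(R)} W_n(R') → M ⊗_{W_n(R)} W_n(R' ⊗_R R') is exact. -/

import Mathlib

open TensorProduct

/-- The ring homomorphism `W_n(R) → W_n(S)` induced by `f : R → S`. -/
noncomputable def truncatedWittVectorMap (p : ℕ) [Fact p.Prime] (n : ℕ)
    {R S : Type} [CommRing R] [CommRing S] (f : R →+* S) :
    TruncatedWittVector p n R →+* TruncatedWittVector p n S :=
  RingHom.liftOfRightInverse (WittVector.truncate n) TruncatedWittVector.out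
    TruncatedWittVector.truncateFun_out
    ⟨(WittVector.truncate n).comp (WittVector.map f), by
      intro x hx
      rw [WittVector.mem_ker_truncate] at hx
      rw [RingHom.mem_ker, RingHom.comp_apply, ← RingHom.mem_ker,
        WittVector.mem_ker_truncate]
      intro i hi
      rw [WittVector.map_coeff, hx i hi, map_zero]⟩

theorem truncatedWittVectorMap_truncate (p : ℕ) [Fact p.Prime] (n : ℕ)
    {R S : Type} [CommRing R] [CommRing S] (f : R →+* S) (x : WittVector p R) :
    truncatedWittVectorMap p n f (WittVector.truncate n x) =
      WittVector.truncate n (WittVector.map f x) :=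
  RingHom.liftOfRightInverse_comp_apply _ _ _ _ x

theorem truncatedWittVectorMap_comp_apply (p : ℕ) [Fact p.Prime] (n : ℕ)
    {R S T : Type} [CommRing R] [CommRing S] [CommRing T] (f : R →+* S) (g : S →+* T)
    (a : TruncatedWittVector p n R) :
    truncatedWittVectorMap p n g (truncatedWittVectorMap p n f a) =
      truncatedWittVectorMap p n (g.comp f) a := by
  obtain ⟨x, rfl⟩ := WittVector.truncate_surjective (p := p) n R a
  rw [truncatedWittVectorMap_truncate, truncatedWittVectorMap_truncate,
    truncatedWittVectorMap_truncate]
  congr 1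

/-- A ring homomorphism `ψ : B → C` between `A`-algebras compatible with the structure maps,
viewed as an `A`-linear map. -/
noncomputable def ringHomToLinearMap {A B C : Type} [CommRing A] [CommRing B] [CommRing C]
    [Algebra A B] [Algebra A C] (ψ : B →+* C)
    (h : ∀ a : A, ψ (algebraMap A B a) = algebraMap A C a) : B →ₗ[A] C where
  toFun := ψ
  map_add' := map_add ψ
  map_smul' := fun a b => by
    simp only [Algebra.smul_def, map_mul, RingHom.id_apply, h]

/-!
On underlying sets `W_n(S)` is `S^n` and `W_n(f)` acts coordinatewise, so `W_n` preserves
injectivity and equalizers. Faithfully flat descent makes `R → R' ⇉ R' ⊗_R R'` an equalizer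
with injective first map, hence so is `W_n(R) → W_n(R') ⇉ W_n(R' ⊗_R R')`. Read as an exact
sequence `0 → W_n(R) → W_n(R') → W_n(R' ⊗_R R')` of `W_n(R)`-modules (the last map being the
difference of the two), it stays exact after tensoring with the flat module `M`.
-/

section TruncatedWittVectorMap

variable (p : ℕ) [Fact p.Prime] (n : ℕ) {R S T : Type} [CommRing R] [CommRing S] [CommRing T]

theorem truncatedWittVectorMap_coeff (f : R →+* S) (x : TruncatedWittVector p n R) (i : Fin n) :
    (truncatedWittVectorMap p n f x).coeff i = f (x.coeff i) := by
  obtain ⟨y, rfl⟩ := WittVector.truncate_surjective (p := p) n R x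
  rw [truncatedWittVectorMap_truncate, WittVector.coeff_truncate, WittVector.coeff_truncate,
    WittVector.map_coeff]

theorem truncatedWittVectorMap_injective {f : R →+* S} (hf : Function.Injective f) :
    Function.Injective (truncatedWittVectorMap p n f) := fun x y hxy =>
  TruncatedWittVector.ext fun i => hf <| by
    rw [← truncatedWittVectorMap_coeff, ← truncatedWittVectorMap_coeff, hxy]

theorem eqLocus_truncatedWittVectorMap (φ : R →+* S) (f g : S →+* T)
    (h : (f.eqLocus g : Set S) = Set.range φ) :
    ((truncatedWittVectorMap p n f).eqLocus (truncatedWittVectorMap p n g) :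
        Set (TruncatedWittVector p n S)) =
      Set.range (truncatedWittVectorMap p n φ) := by
  ext x
  simp only [SetLike.mem_coe, RingHom.mem_eqLocus, Set.mem_range]
  constructor
  · intro hx
    have hcoeff : ∀ i, x.coeff i ∈ Set.range φ := fun i => by
      rw [← h, SetLike.mem_coe, RingHom.mem_eqLocus, ← truncatedWittVectorMap_coeff,
        ← truncatedWittVectorMap_coeff, hx]
    choose r hr using hcoeff
    exact ⟨TruncatedWittVector.mk p r, TruncatedWittVector.ext fun i => by
      rw [truncatedWittVectorMap_coeff, TruncatedWittVector.coeff_mk, hr]⟩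
  · rintro ⟨y, rfl⟩
    have hfg : f.comp φ = g.comp φ :=
      RingHom.ext fun s => (Set.ext_iff.mp h (φ s)).mpr ⟨s, rfl⟩
    rw [truncatedWittVectorMap_comp_apply, truncatedWittVectorMap_comp_apply, hfg]

end TruncatedWittVectorMap

section FlatBaseChange

variable {A B : Type*} [CommSemiring A] [Semiring B] [Algebra A B]
  (M : Type*) [AddCommMonoid M] [Module A M]

theorem lTensor_algebraLinearMap_apply (w : M ⊗[A] A) :
    LinearMap.lTensor M (Algebra.linearMap A B) w = TensorProduct.rid A M w ⊗ₜ 1 := by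
  induction w with
  | zero => simp
  | add a b ha hb => simp [ha, hb, add_tmul]
  | tmul m a => simp [Algebra.algebraMap_eq_smul_one, smul_tmul]

theorem range_lTensor_algebraLinearMap :
    Set.range (LinearMap.lTensor M (Algebra.linearMap A B)) =
      Set.range fun m : M => (m ⊗ₜ (1 : B) : M ⊗[A] B) := by
  ext z
  simp only [Set.mem_range, lTensor_algebraLinearMap_apply]
  exact ((TensorProduct.rid A M).surjective.exists (p := fun m : M => m ⊗ₜ[A] (1 : B) = z)).symm

variable [Module.Flat A M]

theorem Module.Flat.tmul_one_injective (h : Function.Injective (algebraMap A B)) :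
    Function.Injective fun m : M => (m ⊗ₜ (1 : B) : M ⊗[A] B) := by
  intro m m' hm
  apply (TensorProduct.rid A M).symm.injective
  apply Module.Flat.lTensor_preserves_injective_linearMap (M := M) (Algebra.linearMap A B) h
  simpa [lTensor_algebraLinearMap_apply] using hm

end FlatBaseChange

theorem Module.Flat.lTensor_eq_lTensor_iff_exists_tmul_one {A B C : Type}
    [CommRing A] [CommRing B] [CommRing C] [Algebra A B] [Algebra A C]
    (M : Type) [AddCommGroup M] [Module A M] [Module.Flat A M] {ψL ψR : B →+* C}
    (hL : ∀ a : A, ψL (algebraMap A B a) = algebraMap A C a)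
    (hR : ∀ a : A, ψR (algebraMap A B a) = algebraMap A C a)
    (h : (ψL.eqLocus ψR : Set B) = Set.range (algebraMap A B)) (z : M ⊗[A] B) :
    LinearMap.lTensor M (ringHomToLinearMap ψL hL) z =
        LinearMap.lTensor M (ringHomToLinearMap ψR hR) z ↔
      ∃ m : M, z = m ⊗ₜ 1 := by
  have hexact : Function.Exact (Algebra.linearMap A B)
      (ringHomToLinearMap ψL hL - ringHomToLinearMap ψR hR) := fun x => by
    rw [LinearMap.sub_apply, sub_eq_zero]
    exact Set.ext_iff.mp h x
  rw [← sub_eq_zero, ← LinearMap.sub_apply, ← LinearMap.lTensor_sub,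
    Module.Flat.lTensor_exact M hexact z, range_lTensor_algebraLinearMap]
  exact exists_congr fun m => eq_comm

set_option maxHeartbeats 2000000 in
/-- Let `p` be nilpotent in `R`, let `R → R'` be faithfully flat, and let `M` be a flat
`W_n(R)`-module.  Then the Amitsur-type sequence
`0 → M → M ⊗_{W_n(R)} W_n(R') ⇉ M ⊗_{W_n(R)} W_n(R' ⊗_R R')`
is exact: the first map is injective and its image is the equalizer of the two maps induced
by the two inclusions `R' → R' ⊗_R R'`. -/
theorem truncatedWittVector_amitsur_exact (p : ℕ) [Fact p.Prime] (n : ℕ)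
    (R R' : Type) [CommRing R] [CommRing R'] [Algebra R R']
    [Module.FaithfullyFlat R R']
    (M : Type) [AddCommGroup M] [Module (TruncatedWittVector p n R) M]
    [Module.Flat (TruncatedWittVector p n R) M] :
    letI : Algebra (TruncatedWittVector p n R) (TruncatedWittVector p n R') :=
      (truncatedWittVectorMap p n (algebraMap R R')).toAlgebra
    letI : Algebra (TruncatedWittVector p n R) (TruncatedWittVector p n (R' ⊗[R] R')) :=
      (truncatedWittVectorMap p n
        ((Algebra.TensorProduct.includeLeftRingHom (R := R) (A := R') (B := R')).comp
          (algebraMap R R'))).toAlgebra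
    Function.Injective (fun m : M =>
        (m ⊗ₜ (1 : TruncatedWittVector p n R') :
          M ⊗[TruncatedWittVector p n R] TruncatedWittVector p n R')) ∧
      ∀ z : M ⊗[TruncatedWittVector p n R] TruncatedWittVector p n R',
        LinearMap.lTensor M (ringHomToLinearMap
            (truncatedWittVectorMap p n
              (Algebra.TensorProduct.includeLeftRingHom (R := R) (A := R') (B := R')))
            (fun a => truncatedWittVectorMap_comp_apply p n _ _ a)) z =
          LinearMap.lTensor M (ringHomToLinearMap
            (truncatedWittVectorMap p n
              (Algebra.TensorProduct.includeRight (R := R) (A := R') (B := R')).toRingHom)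
            (fun a => by
              show truncatedWittVectorMap p n
                  (Algebra.TensorProduct.includeRight (R := R) (A := R') (B := R')).toRingHom
                  (truncatedWittVectorMap p n (algebraMap R R') a) =
                truncatedWittVectorMap p n
                  ((Algebra.TensorProduct.includeLeftRingHom (R := R) (A := R') (B := R')).comp
                    (algebraMap R R')) a
              rw [truncatedWittVectorMap_comp_apply,
                ← Algebra.TensorProduct.includeLeftRingHom_comp_algebraMap])) z ↔
          ∃ m : M, z = m ⊗ₜ 1 := by
  let _ : Algebra (TruncatedWittVector p n R) (TruncatedWittVector p n R') :=
    (truncatedWittVectorMap p n (algebraMap R R')).toAlgebra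
  let _ : Algebra (TruncatedWittVector p n R) (TruncatedWittVector p n (R' ⊗[R] R')) :=
    (truncatedWittVectorMap p n
      ((Algebra.TensorProduct.includeLeftRingHom (R := R) (A := R') (B := R')).comp
        (algebraMap R R'))).toAlgebra
  exact ⟨Module.Flat.tmul_one_injective M <|
        truncatedWittVectorMap_injective p n (FaithfulSMul.algebraMap_injective R R'),
      Module.Flat.lTensor_eq_lTensor_iff_exists_tmul_one M _ _ <|
        eqLocus_truncatedWittVectorMap p n _ _ _
          (Algebra.IsEffective.of_faithfullyFlat R R').eqLocus_includeLeft_includeRight⟩
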